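/- arXiv:2201.00040 — 8 statements merged into one kernel-verified Lean document; each statement's English description precedes it below -/
import Mathlib

section
/- Suppose t, u > 0 and w, x, y, z > 0 satisfy 2uw = x + y, (2+t)x + x + ux = (1+2t)y + z + uw, (1+2t)y + y + uy = (2+t)x + uw + z, and 2z = u(x+y). If x/y = (1+2t)/(2+t), then t = 1. Conversely, if t = 1 then x = y. -/
theorem dasep322_main (t u w x y z : ℝ)
    (ht : 0 < t) (hu : 0 < u)
    (hw : 0 < w) (hx : 0 < x) (hy : 0 < y) (hz : 0 < z)
    (h1 : 2 * u * w = x + y)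
    (h2 : (2 + t) * x + x + u * x = (1 + 2 * t) * y + z + u * w)
    (h3 : (1 + 2 * t) * y + y + u * y = (2 + t) * x + u * w + z)
    (h4 : 2 * z = u * (x + y)) :
    (x / y = (1 + 2 * t) / (2 + t) → t = 1) ∧ (t = 1 → x = y) := by
  have hE : x * (5 + 2 * t + u) = y * (3 + 4 * t + u) := by linarith
  constructor
  · intro hr
    have h2t : (0:ℝ) < 2 + t := by linarith
    have hr' : x * (2 + t) = y * (1 + 2 * t) := by
      field_simp at hr
      linarith
    have key : y * (1 + u) * (1 - t) = 0 := by nlinarith [hE, hr']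
    have h1u : (0:ℝ) < 1 + u := by linarith
    have := mul_pos hy h1u
    have : (1 - t) = 0 := by
      rcases mul_eq_zero.mp key with h | h
      · linarith
      · exact h
    linarith
  · intro ht1
    subst ht1
    nlinarith [hE]
end

section
/- For real numbers t ≥ 0, u ≥ 0: if 2u³t + 6u²t² + 9ut³ − 2u³ + 4u²t + 24ut² + 9t³ − 10u² − 5ut + 18t² − 28u − 7t − 20 = 0, then t = 1. -/
theorem dasep332_poly_forces_t_eq_one (t u : ℝ) (ht : 0 ≤ t) (hu : 0 ≤ u)
    (h : 2 * u ^ 3 * t + 6 * u ^ 2 * t ^ 2 + 9 * u * t ^ 3 - 2 * u ^ 3 + 4 * u ^ 2 * t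
      + 24 * u * t ^ 2 + 9 * t ^ 3 - 10 * u ^ 2 - 5 * u * t + 18 * t ^ 2
      - 28 * u - 7 * t - 20 = 0) :
    t = 1 := by
  have hpos : 0 < 2*u^3 + 6*u^2*t + 9*u*t^2 + 10*u^2 + 33*u*t + 9*t^2 + 28*u + 27*t + 20 := by
    positivity
  have hfac : (t - 1) * (2*u^3 + 6*u^2*t + 9*u*t^2 + 10*u^2 + 33*u*t + 9*t^2 + 28*u + 27*t + 20) = 0 := by
    nlinarith [h]
  rcases mul_eq_zero.mp hfac with h1 | h2
  · linarith
  · linarith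
end

section
/- Under the nine DASEP(3,3,2) equilibrium equations with u + 1 ≠ 0, the identity (4u + 2t + 5)·b₃ = (4t + 3)·c₃ + 3b₂ + c₂ holds. -/
theorem dasep332_eq19 (t u a1 a2 a3 b1 b2 b3 c1 c2 c3 : ℝ)
    (hu : u + 1 ≠ 0)
    (e1 : 2 * u * a1 = b3 + c3)
    (e2 : (2 + t) * b3 + 2 * u * b3 + b3 = (1 + 2 * t) * c3 + b2 + a2 + u * a1)
    (e3 : (1 + 2 * t) * c3 + 2 * u * c3 + c3 = (2 + t) * b3 + c2 + a2 + u * a1)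
    (e4 : 2 * a2 + 2 * u * a2 = b1 + c1 + u * b3 + u * c3)
    (e5 : (2 + t) * b2 + u * b2 + b2 = (1 + 2 * t) * c2 + b1 + u * b3)
    (e6 : (1 + 2 * t) * c2 + u * c2 + c2 = (2 + t) * b2 + c1 + u * c3)
    (e7 : 2 * a3 = u * b1 + u * c1)
    (e8 : (2 + t) * b1 + u * b1 + 2 * b1 = (1 + 2 * t) * c1 + a3 + u * b2 + u * a2)
    (e9 : (1 + 2 * t) * c1 + u * c1 + 2 * c1 = (2 + t) * b1 + a3 + u * a2 + u * c2) :
    (4 * u + 2 * t + 5) * b3 = (4 * t + 3) * c3 + 3 * b2 + c2 := by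
  have key : (u + 1) * ((4 * u + 2 * t + 5) * b3) =
      (u + 1) * ((4 * t + 3) * c3 + 3 * b2 + c2) := by
    linear_combination (u + 1) * e1 + 2 * (u + 1) * e2 + e4 - e5 - e6
  exact mul_left_cancel₀ hu key
end

section
/- Under the nine DASEP(3,3,2) equilibrium equations with u + 1 ≠ 0, one has 2c₂ = (4t + 3u + 3)c₃ − (u + 2t + 5)b₃ and 2b₂ = (3u + 2t + 5)b₃ − (u + 4t + 3)c₃. -/
theorem dasep332_eq36_37 (t u a1 a2 a3 b1 b2 b3 c1 c2 c3 : ℝ)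
    (hu : u + 1 ≠ 0)
    (e1 : 2 * u * a1 = b3 + c3)
    (e2 : (2 + t) * b3 + 2 * u * b3 + b3 = (1 + 2 * t) * c3 + b2 + a2 + u * a1)
    (e3 : (1 + 2 * t) * c3 + 2 * u * c3 + c3 = (2 + t) * b3 + c2 + a2 + u * a1)
    (e4 : 2 * a2 + 2 * u * a2 = b1 + c1 + u * b3 + u * c3)
    (e5 : (2 + t) * b2 + u * b2 + b2 = (1 + 2 * t) * c2 + b1 + u * b3)
    (e6 : (1 + 2 * t) * c2 + u * c2 + c2 = (2 + t) * b2 + c1 + u * c3)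
    (e7 : 2 * a3 = u * b1 + u * c1)
    (e8 : (2 + t) * b1 + u * b1 + 2 * b1 = (1 + 2 * t) * c1 + a3 + u * b2 + u * a2)
    (e9 : (1 + 2 * t) * c1 + u * c1 + 2 * c1 = (2 + t) * b1 + a3 + u * a2 + u * c2) :
    2 * c2 = (4 * t + 3 * u + 3) * c3 - (u + 2 * t + 5) * b3 ∧
    2 * b2 = (3 * u + 2 * t + 5) * b3 - (u + 4 * t + 3) * c3 := by
  have key : (u + 1) * (2 * a2) = (u + 1) * (b2 + c2) := by
    linear_combination e4 - e5 - e6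
  have ha2 : 2 * a2 = b2 + c2 := mul_left_cancel₀ hu key
  have hsum : b2 + c2 = u * b3 + u * c3 := by
    linear_combination (-1/2) * e1 - (1/2) * e2 - (1/2) * e3 - (1/2) * ha2
  constructor
  · linear_combination hsum + e2 - e3
  · linear_combination hsum - e2 + e3
end

section
/- Under the nine DASEP(3,3,2) equilibrium equations with u + 1 ≠ 0, the identity (4u³ + 36u²t + 90ut² + 72t³ + 32u² + 206ut + 270t² + 108u + 322t + 120)·c₃ = (4u³ + 24u²t + 54ut² + 36t³ + 44u² + 190ut + 198t² + 160u + 350t + 200)·b₃ holds. -/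
theorem dasep332_eq39 (t u a1 a2 a3 b1 b2 b3 c1 c2 c3 : ℝ)
    (hu : u + 1 ≠ 0)
    (e1 : 2 * u * a1 = b3 + c3)
    (e2 : (2 + t) * b3 + 2 * u * b3 + b3 = (1 + 2 * t) * c3 + b2 + a2 + u * a1)
    (e3 : (1 + 2 * t) * c3 + 2 * u * c3 + c3 = (2 + t) * b3 + c2 + a2 + u * a1)
    (e4 : 2 * a2 + 2 * u * a2 = b1 + c1 + u * b3 + u * c3)
    (e5 : (2 + t) * b2 + u * b2 + b2 = (1 + 2 * t) * c2 + b1 + u * b3)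
    (e6 : (1 + 2 * t) * c2 + u * c2 + c2 = (2 + t) * b2 + c1 + u * c3)
    (e7 : 2 * a3 = u * b1 + u * c1)
    (e8 : (2 + t) * b1 + u * b1 + 2 * b1 = (1 + 2 * t) * c1 + a3 + u * b2 + u * a2)
    (e9 : (1 + 2 * t) * c1 + u * c1 + 2 * c1 = (2 + t) * b1 + a3 + u * a2 + u * c2) :
    (4 * u ^ 3 + 36 * u ^ 2 * t + 90 * u * t ^ 2 + 72 * t ^ 3 + 32 * u ^ 2
      + 206 * u * t + 270 * t ^ 2 + 108 * u + 322 * t + 120) * c3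
    = (4 * u ^ 3 + 24 * u ^ 2 * t + 54 * u * t ^ 2 + 36 * t ^ 3 + 44 * u ^ 2
      + 190 * u * t + 198 * t ^ 2 + 160 * u + 350 * t + 200) * b3 := by
  have h2 : (u + 1) ^ 2 ≠ 0 := pow_ne_zero 2 hu
  apply mul_left_cancel₀ h2
  linear_combination (3*t^2*u^2 + 6*t^2*u + 3*t^2 + 2*t*u^3 + 7*t*u^2 + 8*t*u + 3*t - 2*u^3 - 12*u^2 - 18*u - 8) * e1 + (-15*t^2*u^2 - 30*t^2*u - 15*t^2 - 10*t*u^3 - 71*t*u^2 - 112*t*u - 51*t - 2*u^4 - 22*u^3 - 86*u^2 - 114*u - 48) * e2 + (21*t^2*u^2 + 42*t^2*u + 21*t^2 + 14*t*u^3 + 85*t*u^2 + 128*t*u + 57*t + 2*u^4 + 18*u^3 + 62*u^2 + 78*u + 32) * e3 + (3*t^2*u + 3*t^2 + 2*t*u^2 + 5*t*u + 3*t - 4*u^2 - 12*u - 8) * e4 + (-3*t^2*u - 3*t^2 - 6*t*u^2 - 13*t*u - 7*t - 2*u^3 - 16*u^2 - 22*u - 8) * e5 + (-3*t^2*u - 3*t^2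 + 6*t*u^2 + 11*t*u + 5*t + 2*u^3 + 12*u^2 + 22*u + 12) * e6 + (-2*u^2 - 4*u - 2) * e7 + (-4*u^2 - 8*u - 4) * e8
end

section
/- Let t ≥ 0, u ≥ 0 and suppose a₁, a₂, a₃, b₁, b₂, b₃, c₁, c₂, c₃ satisfy the nine DASEP(3,3,2) equilibrium equations, with b₃ and c₃ not both zero. If b₃·(2+t) = c₃·(1+2t) (i.e., b₃ and c₃ are in the ratio (1+2t) : (2+t)), then t = 1. -/
theorem dasep332_ratio_forces_t_eq_one (t u a1 a2 a3 b1 b2 b3 c1 c2 c3 : ℝ)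
    (ht : 0 ≤ t) (hu : 0 ≤ u)
    (e1 : 2 * u * a1 = b3 + c3)
    (e2 : (2 + t) * b3 + 2 * u * b3 + b3 = (1 + 2 * t) * c3 + b2 + a2 + u * a1)
    (e3 : (1 + 2 * t) * c3 + 2 * u * c3 + c3 = (2 + t) * b3 + c2 + a2 + u * a1)
    (e4 : 2 * a2 + 2 * u * a2 = b1 + c1 + u * b3 + u * c3)
    (e5 : (2 + t) * b2 + u * b2 + b2 = (1 + 2 * t) * c2 + b1 + u * b3)
    (e6 : (1 + 2 * t) * c2 + u * c2 + c2 = (2 + t) * b2 + c1 + u * c3)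
    (e7 : 2 * a3 = u * b1 + u * c1)
    (e8 : (2 + t) * b1 + u * b1 + 2 * b1 = (1 + 2 * t) * c1 + a3 + u * b2 + u * a2)
    (e9 : (1 + 2 * t) * c1 + u * c1 + 2 * c1 = (2 + t) * b1 + a3 + u * a2 + u * c2)
    (hnz : ¬ (b3 = 0 ∧ c3 = 0))
    (hratio : b3 * (2 + t) = c3 * (1 + 2 * t)) :
    t = 1 := by
  -- differences of pairs
  have hA : (1 - t) * (b3 + c3) + (4 + 3*t + 2*u) * (b3 - c3) = b2 - c2 := by
    linear_combination e2 - e3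
  have hB : (1 - t) * (b2 + c2) + (4 + 3*t + u) * (b2 - c2) = (b1 - c1) + u * (b3 - c3) := by
    linear_combination e5 - e6
  have hC : (1 - t) * (b1 + c1) + (5 + 3*t + u) * (b1 - c1) = u * (b2 - c2) := by
    linear_combination e8 - e9
  -- sums of pairs
  have hS1 : 2 * (b1 + c1) = u * (b2 + c2) + 2 * u * a2 := by
    linear_combination e8 + e9 + e7
  have hS3 : 2 * u * (b3 + c3) = (b2 + c2) + 2 * a2 := by
    linear_combination e2 + e3 + e1
  have h1 : 2 * (b1 + c1) = 2 * u^2 * (b3 + c3) := by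
    linear_combination hS1 - u * hS3
  have hS2 : (1 + u) * (b2 + c2) = (b1 + c1) + u * (b3 + c3) := by
    linear_combination e5 + e6
  have h2 : (1 + u) * ((b2 + c2) - u * (b3 + c3)) = 0 := by
    linear_combination hS2 + h1 / 2
  have hu1 : (0:ℝ) < 1 + u := by linarith
  have h2' : b2 + c2 = u * (b3 + c3) := by
    rcases mul_eq_zero.mp h2 with h | h
    · linarith
    · linarith
  -- the key elimination
  have hfinal :
      ((5 + 3*t + u) * (4 + 3*t + u) * (4 + 3*t + 2*u)
        - u * (5 + 3*t + u) - u * (4 + 3*t + 2*u)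
        - 3 * (1 + t) * (u^2 + (5 + 3*t + u) * u + (5 + 3*t + u) * (4 + 3*t + u) - u))
        * (b3 - c3) = 0 := by
    linear_combination hC + (5 + 3*t + u) * hB
      + ((5 + 3*t + u) * (4 + 3*t + u) - u) * hA
      - ((1 - t)/2) * h1 - (5 + 3*t + u) * (1 - t) * h2'
      - 2 * (u^2 + (5 + 3*t + u) * u + (5 + 3*t + u) * (4 + 3*t + u) - u) * hratio
  have hEpos : (0:ℝ) <
      (5 + 3*t + u) * (4 + 3*t + u) * (4 + 3*t + 2*u)
        - u * (5 + 3*t + u) - u * (4 + 3*t + 2*u)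
        - 3 * (1 + t) * (u^2 + (5 + 3*t + u) * u + (5 + 3*t + u) * (4 + 3*t + u) - u) := by
    nlinarith [mul_nonneg ht hu, mul_nonneg ht ht, mul_nonneg hu hu,
      mul_nonneg (mul_nonneg ht ht) hu, mul_nonneg (mul_nonneg ht hu) hu,
      mul_nonneg (mul_nonneg ht ht) ht, mul_nonneg (mul_nonneg hu hu) hu]
  have hd3 : b3 - c3 = 0 := by
    rcases mul_eq_zero.mp hfinal with h | h
    · exfalso; linarith
    · exact h
  have hb3 : b3 * (1 - t) = 0 := by linear_combination hratio - (1 + 2*t) * hd3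
  rcases mul_eq_zero.mp hb3 with h | h
  · exact absurd ⟨h, by linarith⟩ hnz
  · linarith
end

section
/- For any real u ≥ 0, any integers n ≥ 2, and q_{i,j} defined by q_{i,j} = 2u^{i+j−2}/(∑_{k=0}^{n−1} u^k)² for i ≠ j and q_{i,i} = 2u^{2i−2}/(∑_{k=0}^{n−1} u^k)² (with interior indices 1 < i, j < p), these values satisfy the recurrence (2 + 2u)·q_{i,j} = q_{i+1,j} + q_{i,j+1} + u·q_{i−1,j} + u·q_{i,j−1}. -/
theorem dasep3p2_recurrence (u : ℝ) (hu : 0 ≤ u) (n : ℕ) (hn : 2 ≤ n)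
    (q : ℕ → ℕ → ℝ)
    (hq : ∀ i j, 1 ≤ i → 1 ≤ j →
      q i j = 2 * u ^ (i + j - 2) / (∑ k ∈ Finset.range n, u ^ k) ^ 2)
    (i j : ℕ) (hi : 2 ≤ i) (hj : 2 ≤ j) :
    (2 + 2 * u) * q i j
      = q (i + 1) j + q i (j + 1) + u * q (i - 1) j + u * q i (j - 1) := by
  obtain ⟨a, rfl⟩ := Nat.exists_eq_add_of_le hi
  obtain ⟨b, rfl⟩ := Nat.exists_eq_add_of_le hj
  rw [hq, hq, hq, hq, hq] <;> try omega
  have h1 : 2 + a + (2 + b) - 2 = a + b + 2 := by omega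
  have h2 : 2 + a + 1 + (2 + b) - 2 = a + b + 3 := by omega
  have h3 : 2 + a + (2 + b + 1) - 2 = a + b + 3 := by omega
  have h4 : 2 + a - 1 + (2 + b) - 2 = a + b + 1 := by omega
  have h5 : 2 + a + (2 + b - 1) - 2 = a + b + 1 := by omega
  rw [h1, h2, h3, h4, h5]
  ring
end

section
/- Suppose t = 1. Then the four DASEP(3,2,2) equilibrium equations 2uw = x + y; 3x + x + ux = 3y + z + uw; 3y + y + uy = 3x + uw + z; 2z = u(x+y) imply x = y, and the solution with normalization 3(w + x + y + z) = 1 is given by w = 1/(3(1+u)²), x = y = u/(3(1+u)²), z = u²/(3(1+u)²). -/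
theorem dasep322_t_eq_one (u w x y z : ℝ) (hu : 0 ≤ u)
    (h1 : 2 * u * w = x + y)
    (h2 : 3 * x + x + u * x = 3 * y + z + u * w)
    (h3 : 3 * y + y + u * y = 3 * x + u * w + z)
    (h4 : 2 * z = u * (x + y))
    (hnorm : 3 * (w + x + y + z) = 1) :
    x = y ∧ w = 1 / (3 * (1 + u) ^ 2) ∧ x = u / (3 * (1 + u) ^ 2) ∧
    y = u / (3 * (1 + u) ^ 2) ∧ z = u ^ 2 / (3 * (1 + u) ^ 2) := by
  have h7 : (7 + u) * (x - y) = 0 := by nlinarith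
  have hxy : x = y := by
    have : x - y = 0 := by
      rcases mul_eq_zero.mp h7 with h | h
      · nlinarith
      · exact h
    linarith
  have hs : (1 + u) ^ 2 > 0 := by positivity
  have hw : w * (3 * (1 + u) ^ 2) = 1 := by nlinarith
  refine ⟨hxy, ?_, ?_, ?_, ?_⟩ <;> field_simp <;> nlinarith
end
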